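/- Define the q-deformed Stirling numbers S_q[n,k] by S_q[n,k] = q^{k−1}·S_q[n−1,k−1] + [k]_q·S_q[n−1,k] with S_q[n,0]=S_q[0,n]=δ_{0,n}, and the q-Bell numbers B_q[n] = ∑_{k=0}^{n} S_q[n,k]. Then the q-analogue of Spivey's identity holds: B_q[n+m] = ∑_{r=0}^{n} ∑_{j=0}^{m} q^{rj} · C(n,r) · S_q[m,j] · B_q[r] · [j]_q^{n−r}, with the convention 0^0 = 1. -/

import Mathlib

open Finset

/-- The q-integer `[k]_q = 1 + q + ... + q^(k-1)`. -/
def qint {K : Type*} [CommRing K] (q : K) (k : ℕ) : K := ∑ i ∈ Finset.range k, q ^ i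

/-- The q-deformed Stirling numbers `S_q[n,k]`, satisfying
`S[n,k] = q^(k-1) S[n-1,k-1] + [k]_q S[n-1,k]` with `S[n,0]=S[0,n]=δ_{0,n}`. -/
def Sq {K : Type*} [CommRing K] (q : K) : ℕ → ℕ → K
  | 0, 0 => 1
  | 0, _ + 1 => 0
  | _ + 1, 0 => 0
  | n + 1, k + 1 => q ^ k * Sq q n k + qint q (k + 1) * Sq q n (k + 1)

/-- The q-Bell numbers. -/
def Bq {K : Type*} [CommRing K] (q : K) (n : ℕ) : K := ∑ k ∈ Finset.range (n + 1), Sq q n k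

/-
The rows of `S_q` are the iterates `Sq q n = Dⁿ δ₀` of the linear operator
`(D f)(k + 1) = q ^ k f k + [k + 1]_q f (k + 1)` on sequences. Since
`[k + 1]_q = [j]_q + q ^ j [k + 1 - j]_q`, conjugating `D` by the shift `T_j` by `j` places gives
`D T_j = T_j ([j]_q + q ^ j D)`, so `Dⁿ δ_j = T_j ([j]_q + q ^ j D)ⁿ δ₀`, which the binomial theorem
expands into shifted rows `T_j (Sq q r)`. Writing `Sq q (n + m) = Dⁿ (∑ⱼ Sq q m j δ_j)` and summing
over `k`, each shifted row contributes `Bq q r`.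
-/

section

variable {K : Type*} [CommRing K] (q : K)

lemma qint_add (a b : ℕ) : qint q (a + b) = qint q a + q ^ a * qint q b := by
  simp only [qint, sum_range_add, pow_add, mul_sum]

lemma Sq_eq_zero_of_lt {n k : ℕ} (h : n < k) : Sq q n k = 0 := by
  induction n generalizing k with
  | zero => obtain ⟨k, rfl⟩ := Nat.exists_eq_succ_of_ne_zero (by omega : k ≠ 0); rfl
  | succ n ih =>
    obtain ⟨k, rfl⟩ := Nat.exists_eq_succ_of_ne_zero (by omega : k ≠ 0)
    rw [Sq, ih (by omega), ih (by omega), mul_zero, mul_zero, add_zero]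

def stirlingOp : Module.End K (ℕ → K) where
  toFun f
    | 0 => 0
    | k + 1 => q ^ k * f k + qint q (k + 1) * f (k + 1)
  map_add' f g := by funext k; cases k <;> simp only [Pi.add_apply, add_zero]; ring
  map_smul' c f := by funext k; cases k <;> simp only [Pi.smul_apply, smul_eq_mul, mul_zero,
    RingHom.id_apply]; ring

def shiftOp (j : ℕ) : Module.End K (ℕ → K) where
  toFun f k := if j ≤ k then f (k - j) else 0
  map_add' f g := by funext k; split_ifs <;> simp [*]
  map_smul' c f := by funext k; split_ifs <;> simp [*]


lemma Sq_zero : Sq q 0 = Pi.single 0 1 := by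
  funext k; cases k <;> rfl

lemma Sq_succ (n : ℕ) : Sq q (n + 1) = stirlingOp q (Sq q n) := by
  funext k; cases k <;> rfl

lemma Sq_add (n m : ℕ) : Sq q (n + m) = (stirlingOp q ^ n) (Sq q m) := by
  induction n with
  | zero => simp
  | succ n ih => rw [Nat.add_right_comm, Sq_succ, ih, pow_succ', Module.End.mul_apply]

lemma Sq_eq_sum_single (m : ℕ) :
    Sq q m = ∑ j ∈ range (m + 1), Sq q m j • Pi.single j 1 := by
  funext k
  simp only [Finset.sum_apply, Pi.smul_apply, Pi.single_apply, smul_eq_mul, mul_ite, mul_one,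
    mul_zero, sum_ite_eq, mem_range]
  split_ifs with hk
  · rfl
  · exact Sq_eq_zero_of_lt q (by omega)

lemma shiftOp_single_zero (j : ℕ) (c : K) : shiftOp j (Pi.single 0 c) = Pi.single j c := by
  funext k
  simp only [shiftOp, LinearMap.coe_mk, AddHom.coe_mk, Pi.single_apply]
  split_ifs <;> first | rfl | omega

lemma stirlingOp_mul_shiftOp (j : ℕ) :
    stirlingOp q * shiftOp j = shiftOp j * (qint q j • 1 + q ^ j • stirlingOp q) := by
  ext f k
  rcases k with _ | k
  · simp +contextual [stirlingOp, shiftOp, qint]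
  by_cases hjk : j ≤ k
  · obtain ⟨i, rfl⟩ := Nat.exists_eq_add_of_le hjk
    have hi : j + i + 1 - j = i + 1 := by omega
    have h1 : j ≤ j + i + 1 := by omega
    simp only [stirlingOp, shiftOp, LinearMap.coe_mk, AddHom.coe_mk, Module.End.mul_apply,
      LinearMap.add_apply, LinearMap.smul_apply, Module.End.one_apply, Pi.add_apply,
      Pi.smul_apply, smul_eq_mul, if_pos hjk, if_pos h1, hi, Nat.add_sub_cancel_left]
    rw [add_assoc j i 1, qint_add, pow_add]
    ring
  · simp only [stirlingOp, shiftOp, LinearMap.coe_mk, AddHom.coe_mk, Module.End.mul_apply,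
      LinearMap.add_apply, LinearMap.smul_apply, Module.End.one_apply, Pi.add_apply,
      Pi.smul_apply, smul_eq_mul, if_neg hjk]
    split_ifs with h2
    · obtain rfl : j = k + 1 := by omega
      simp
    · simp

lemma sum_range_shiftOp {f : ℕ → K} {r j N : ℕ} (hf : ∀ k, r < k → f k = 0) (h : j + r ≤ N) :
    ∑ k ∈ range (N + 1), shiftOp j f k = ∑ k ∈ range (r + 1), f k := by
  obtain ⟨N, rfl⟩ := Nat.exists_eq_add_of_le h
  have hshift (k : ℕ) : shiftOp j f (j + k) = f k := by simp [shiftOp]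
  have hlow : ∑ k ∈ range j, shiftOp j f k = 0 :=
    sum_eq_zero fun k hk => if_neg (by simpa using hk)
  rw [show j + r + N + 1 = j + (r + 1 + N) by ring, sum_range_add, sum_range_add, hlow]
  simp only [hshift, zero_add, add_eq_left]
  exact sum_eq_zero fun k _ => hf _ (by omega)

lemma smul_one_add_smul_pow {A : Type*} [Ring A] [Algebra K A] (a b : K) (x : A) (n : ℕ) :
    (a • 1 + b • x) ^ n = ∑ r ∈ range (n + 1), ((n.choose r : K) * b ^ r * a ^ (n - r)) • x ^ r := by
  rw [add_comm, ((Commute.one_right x).smul_right a).smul_left b |>.add_pow]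
  refine sum_congr rfl fun r _ => ?_
  rw [smul_pow, smul_pow, one_pow, ← Nat.cast_comm, ← nsmul_eq_mul, ← Nat.cast_smul_eq_nsmul K,
    smul_mul_smul_comm, mul_one, smul_smul, mul_assoc]

lemma stirlingOp_pow_mul_shiftOp (n j : ℕ) :
    stirlingOp q ^ n * shiftOp j = shiftOp j * (qint q j • 1 + q ^ j • stirlingOp q) ^ n :=
  (SemiconjBy.pow_right (stirlingOp_mul_shiftOp q j).symm n).symm

lemma Sq_add_eq_sum (n m : ℕ) :
    Sq q (n + m) = ∑ r ∈ range (n + 1), ∑ j ∈ range (m + 1),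
      (q ^ (r * j) * n.choose r * Sq q m j * qint q j ^ (n - r)) • shiftOp j (Sq q r) := by
  rw [sum_comm, Sq_add]
  conv_lhs => rw [Sq_eq_sum_single q m, map_sum]
  refine sum_congr rfl fun j _ => ?_
  rw [map_smul, ← shiftOp_single_zero, ← Module.End.mul_apply, stirlingOp_pow_mul_shiftOp,
    smul_one_add_smul_pow, Module.End.mul_apply, ← Sq_zero, LinearMap.sum_apply, map_sum,
    smul_sum]
  refine sum_congr rfl fun r _ => ?_
  rw [LinearMap.smul_apply, ← Sq_add, add_zero, map_smul, smul_smul]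
  congr 1
  ring

end

theorem stmt_18 {K : Type*} [CommRing K] (q : K) (n m : ℕ) :
    Bq q (n + m) =
      ∑ r ∈ Finset.range (n + 1), ∑ j ∈ Finset.range (m + 1),
        q ^ (r * j) * (Nat.choose n r : K) * Sq q m j * Bq q r * (qint q j) ^ (n - r) := by
  rw [Bq, Sq_add_eq_sum]
  simp only [Finset.sum_apply, Pi.smul_apply, smul_eq_mul]
  rw [sum_comm]
  refine sum_congr rfl fun r hr => ?_
  rw [sum_comm]
  refine sum_congr rfl fun j hj => ?_
  rw [← mul_sum, sum_range_shiftOp (fun _ => Sq_eq_zero_of_lt q)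
    (by simp only [mem_range] at hr hj; omega), ← Bq]
  ring
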